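/- If R ∈ A⊗A⊗A and S ∈ B⊗B⊗B are canonical R-matrices for the k-algebras A and B, then T := R¹⊗S¹ ⊗ R²⊗S² ⊗ R³⊗S³ ∈ (A⊗B)⊗(A⊗B)⊗(A⊗B) is a canonical R-matrix for the tensor product algebra A⊗B. -/

import Mathlib

open TensorProduct

/-!
Pair the factors of `R ⊗ S` by the shuffle `((A ⊗ A) ⊗ A) ⊗ ((B ⊗ B) ⊗ B) ≃ (A ⊗ B)^{⊗ 3}`,
which sends `R ⊗ S` to `T`. For a pure tensor `c = a ⊗ b`, multiplying the middle factor of `T`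
by `c` on the left is the image of multiplying the middle factors of `R` by `a` and of `S` by
`b`, and similarly on the right of the last factor; so the centralizing condition for `T` is the
image of the tensor product of those for `R` and `S`, and extends to all `c` by additivity.
The normalizations are the images of `(1 ⊗ 1) ⊗ (1 ⊗ 1)` under the two-factor shuffle.
-/

namespace TensorProduct

variable {k : Type*} [CommRing k]
  {M₁ M₂ M₃ N₁ N₂ N₃ : Type*}
  [AddCommGroup M₁] [Module k M₁] [AddCommGroup M₂] [Module k M₂]
  [AddCommGroup M₃] [Module k M₃] [AddCommGroup N₁] [Module k N₁]
  [AddCommGroup N₂] [Module k N₂] [AddCommGroup N₃] [Module k N₃]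
  {ι κ : Type*}

theorem tensorTensorTensorComm_sum_tmul_sum (s : Finset ι) (t : Finset κ)
    (m₁ : ι → M₁) (m₂ : ι → M₂) (n₁ : κ → N₁) (n₂ : κ → N₂) :
    tensorTensorTensorComm k M₁ M₂ N₁ N₂
        ((∑ i ∈ s, m₁ i ⊗ₜ[k] m₂ i) ⊗ₜ[k] ∑ j ∈ t, n₁ j ⊗ₜ[k] n₂ j)
      = ∑ i ∈ s, ∑ j ∈ t, (m₁ i ⊗ₜ[k] n₁ j) ⊗ₜ[k] (m₂ i ⊗ₜ[k] n₂ j) := by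
  rw [sum_tmul]
  simp only [tmul_sum, map_sum, tensorTensorTensorComm_tmul]

variable (k M₁ M₂ M₃ N₁ N₂ N₃) in
def tensorTensorTensorComm₃ :
    ((M₁ ⊗[k] M₂) ⊗[k] M₃) ⊗[k] ((N₁ ⊗[k] N₂) ⊗[k] N₃) ≃ₗ[k]
      ((M₁ ⊗[k] N₁) ⊗[k] (M₂ ⊗[k] N₂)) ⊗[k] (M₃ ⊗[k] N₃) :=
  tensorTensorTensorComm k (M₁ ⊗[k] M₂) M₃ (N₁ ⊗[k] N₂) N₃ ≪≫ₗ
    congr (tensorTensorTensorComm k M₁ M₂ N₁ N₂) (LinearEquiv.refl k _)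

theorem tensorTensorTensorComm₃_sum_tmul_sum (s : Finset ι) (t : Finset κ)
    (m₁ : ι → M₁) (m₂ : ι → M₂) (m₃ : ι → M₃) (n₁ : κ → N₁) (n₂ : κ → N₂) (n₃ : κ → N₃) :
    tensorTensorTensorComm₃ k M₁ M₂ M₃ N₁ N₂ N₃
        ((∑ i ∈ s, m₁ i ⊗ₜ[k] m₂ i ⊗ₜ[k] m₃ i) ⊗ₜ[k] ∑ j ∈ t, n₁ j ⊗ₜ[k] n₂ j ⊗ₜ[k] n₃ j)
      = ∑ i ∈ s, ∑ j ∈ t,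
          (m₁ i ⊗ₜ[k] n₁ j) ⊗ₜ[k] (m₂ i ⊗ₜ[k] n₂ j) ⊗ₜ[k] (m₃ i ⊗ₜ[k] n₃ j) := by
  rw [sum_tmul]
  simp only [tensorTensorTensorComm₃, LinearEquiv.trans_apply, tmul_sum, map_sum,
    tensorTensorTensorComm_tmul, congr_tmul, LinearEquiv.refl_apply]

end TensorProduct

section CanonicalRMatrix

variable {k A B : Type*} [CommRing k] [Ring A] [Algebra k A] [Ring B] [Algebra k B]
  {ι κ : Type*} {s : Finset ι} {t : Finset κ}

theorem sum_sum_tmul_eq_one_of_eq_one {a b : ι → A} {c d : κ → B}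
    (hA : ∑ i ∈ s, a i ⊗ₜ[k] b i = (1 : A) ⊗ₜ[k] (1 : A))
    (hB : ∑ j ∈ t, c j ⊗ₜ[k] d j = (1 : B) ⊗ₜ[k] (1 : B)) :
    ∑ i ∈ s, ∑ j ∈ t, (a i ⊗ₜ[k] c j) ⊗ₜ[k] (b i ⊗ₜ[k] d j)
      = (1 : A ⊗[k] B) ⊗ₜ[k] (1 : A ⊗[k] B) := by
  rw [← tensorTensorTensorComm_sum_tmul_sum, hA, hB, tensorTensorTensorComm_tmul,
    Algebra.TensorProduct.one_def]

theorem sum_sum_mul_middle_eq_last_mul {x y z : ι → A} {u v w : κ → B}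
    (hA : ∀ a : A, ∑ i ∈ s, x i ⊗ₜ[k] (a * y i) ⊗ₜ[k] z i
      = ∑ i ∈ s, x i ⊗ₜ[k] y i ⊗ₜ[k] (z i * a))
    (hB : ∀ b : B, ∑ j ∈ t, u j ⊗ₜ[k] (b * v j) ⊗ₜ[k] w j
      = ∑ j ∈ t, u j ⊗ₜ[k] v j ⊗ₜ[k] (w j * b))
    (c : A ⊗[k] B) :
    ∑ i ∈ s, ∑ j ∈ t,
        (x i ⊗ₜ[k] u j) ⊗ₜ[k] (c * (y i ⊗ₜ[k] v j)) ⊗ₜ[k] (z i ⊗ₜ[k] w j)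
      = ∑ i ∈ s, ∑ j ∈ t,
        (x i ⊗ₜ[k] u j) ⊗ₜ[k] (y i ⊗ₜ[k] v j) ⊗ₜ[k] ((z i ⊗ₜ[k] w j) * c) := by
  induction c using TensorProduct.induction_on with
  | zero => simp only [zero_mul, mul_zero, zero_tmul, tmul_zero, Finset.sum_const_zero]
  | tmul a b =>
    simp only [Algebra.TensorProduct.tmul_mul_tmul]
    rw [← tensorTensorTensorComm₃_sum_tmul_sum, ← tensorTensorTensorComm₃_sum_tmul_sum,
      hA, hB]
  | add c₁ c₂ h₁ h₂ =>
    simp only [add_mul, mul_add, tmul_add, add_tmul, Finset.sum_add_distrib, h₁, h₂]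

end CanonicalRMatrix

theorem tensor_product_of_canonical_R_matrices
    (k A B : Type*) [CommRing k] [Ring A] [Algebra k A] [Ring B] [Algebra k B]
    (ι κ : Type*) (s : Finset ι) (t : Finset κ)
    (x y z : ι → A) (u v w : κ → B)
    (hAcen : ∀ a : A,
      ∑ i ∈ s, x i ⊗ₜ[k] (a * y i) ⊗ₜ[k] z i
        = ∑ i ∈ s, x i ⊗ₜ[k] y i ⊗ₜ[k] (z i * a))
    (hAnorm1 : ∑ i ∈ s, (x i * y i) ⊗ₜ[k] z i = (1 : A) ⊗ₜ[k] (1 : A))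
    (hAnorm2 : ∑ i ∈ s, y i ⊗ₜ[k] (z i * x i) = (1 : A) ⊗ₜ[k] (1 : A))
    (hBcen : ∀ c : B,
      ∑ j ∈ t, u j ⊗ₜ[k] (c * v j) ⊗ₜ[k] w j
        = ∑ j ∈ t, u j ⊗ₜ[k] v j ⊗ₜ[k] (w j * c))
    (hBnorm1 : ∑ j ∈ t, (u j * v j) ⊗ₜ[k] w j = (1 : B) ⊗ₜ[k] (1 : B))
    (hBnorm2 : ∑ j ∈ t, v j ⊗ₜ[k] (w j * u j) = (1 : B) ⊗ₜ[k] (1 : B)) :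
    (∀ c : A ⊗[k] B,
      ∑ i ∈ s, ∑ j ∈ t,
          (x i ⊗ₜ[k] u j) ⊗ₜ[k] (c * (y i ⊗ₜ[k] v j)) ⊗ₜ[k] (z i ⊗ₜ[k] w j)
        = ∑ i ∈ s, ∑ j ∈ t,
          (x i ⊗ₜ[k] u j) ⊗ₜ[k] (y i ⊗ₜ[k] v j) ⊗ₜ[k] ((z i ⊗ₜ[k] w j) * c)) ∧
    (∑ i ∈ s, ∑ j ∈ t,
        ((x i ⊗ₜ[k] u j) * (y i ⊗ₜ[k] v j)) ⊗ₜ[k] (z i ⊗ₜ[k] w j)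
      = (1 : A ⊗[k] B) ⊗ₜ[k] (1 : A ⊗[k] B)) ∧
    (∑ i ∈ s, ∑ j ∈ t,
        (y i ⊗ₜ[k] v j) ⊗ₜ[k] ((z i ⊗ₜ[k] w j) * (x i ⊗ₜ[k] u j))
      = (1 : A ⊗[k] B) ⊗ₜ[k] (1 : A ⊗[k] B)) := by
  simp only [Algebra.TensorProduct.tmul_mul_tmul]
  exact ⟨sum_sum_mul_middle_eq_last_mul hAcen hBcen,
    sum_sum_tmul_eq_one_of_eq_one hAnorm1 hBnorm1,
    sum_sum_tmul_eq_one_of_eq_one hAnorm2 hBnorm2⟩
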